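/- The function W : ℝ → ℝ₊ is continuous, satisfies W(x) = W(2π − x) for all x (parity symmetry), and there exist constants c₁, c₂ > 0 such that c₁ |sin(x/2)|^{5/3} ≤ W(x) ≤ c₂ |sin(x/2)|^{5/3} for all x ∈ ℝ. Moreover lim_{x→0} |sin(x/2)|^{−5/3} W(x) = w₀, where w₀ = 4 ∫₀^∞ (2s + s⁴)^{−1/2} ds ∈ (0,∞). -/

import Mathlib

/-!
`F₊ > 0` on `(0, 2π) × [0, 2π]`, so `V` is continuous and positive on `(0, 2π)`; everything else
comes from the behaviour at `x → 0⁺`, where the kernel concentrates at `y = 2π`. With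
`μ = sin(x/2)^{1/3}` and `y = 2π − 4μs`,
`|sin(x/2)|^{-5/3} W(x) = μ V(x) = ∫₀^∞ 4μ² K₂(x, 2π − 4μs) ds`, and
`F₊(x, 2π − 4μs) / μ⁴ = (2s² sinc(μs)² − δ)² + 8s sinc(2μs)` with `0 ≤ δ = (1 − cos(x/2))/μ² ≤ μ⁴`.
So the integrand tends to `4 (2s + s⁴)^{-1/2}`, and the bound `F₊ ≥ μ⁴ (2s + s⁴)/64` lets dominated
convergence give the limit `w₀`. Evenness and `2π`-periodicity of `W` give the limit from the left
and at every multiple of `2π`: `|sin(x/2)|^{-5/3} W(x)`, set to `w₀` at the zeros of `sin(x/2)`,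
is continuous, periodic and positive. Its extreme values are `c₁` and `c₂`, and `W` is its product
with `|sin(x/2)|^{5/3}`, hence continuous.
-/

open MeasureTheory Real Set Filter
open scoped Topology ENNReal ComplexConjugate

noncomputable section

/-- The fundamental periodic cell `I = [0, 2π)`. -/
def II : Set ℝ := Set.Ico 0 (2 * π)

/-- Lebesgue measure restricted to `I`. -/
def muI : Measure ℝ := volume.restrict II

/-- The dispersion relation `ω(x) = |sin(x/2)|`. -/
def omg (x : ℝ) : ℝ := |Real.sin (x / 2)|

/-- `Ω(x,y,z) = ω(x) + ω(y) − ω(z) − ω(x+y−z)`. -/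
def Omg (x y z : ℝ) : ℝ := omg x + omg y - omg z - omg (x + y - z)

/-- The representative of `x` modulo `2π` lying in `[0, 2π)`. -/
def mod2pi (x : ℝ) : ℝ := x - 2 * π * (⌊x / (2 * π)⌋ : ℝ)

/-- `h` on the fundamental cell: `h(x,z) = (z−x)/2 + 2 arcsin( tan(|z−x|/4) cos((x+z)/4) )`. -/
def h0 (x z : ℝ) : ℝ :=
  (z - x) / 2 + 2 * Real.arcsin (Real.tan (|z - x| / 4) * Real.cos ((x + z) / 4))

/-- The extension of `h` to all of `ℝ²`: `h(x,z) = h(x mod 2π, z mod 2π) − (x − (x mod 2π))`. -/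
def hFPU (x z : ℝ) : ℝ := h0 (mod2pi x) (mod2pi z) - (x - mod2pi x)

/-- `F₊(x,y) = (cos(x/2)+cos(y/2))² + 4 sin(x/2) sin(y/2)`. -/
def Fp (x y : ℝ) : ℝ :=
  (Real.cos (x / 2) + Real.cos (y / 2)) ^ 2 + 4 * Real.sin (x / 2) * Real.sin (y / 2)

/-- `F₋(x,y) = (cos(x/2)+cos(y/2))² − 4 sin(x/2) sin(y/2)`. -/
def Fm (x y : ℝ) : ℝ :=
  (Real.cos (x / 2) + Real.cos (y / 2)) ^ 2 - 4 * Real.sin (x / 2) * Real.sin (y / 2)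

/-- The kernel `K₁(x,y) = 4·𝟙(F₋(x,y) > 0)/√(F₋(x,y))`. -/
def K1 (x y : ℝ) : ℝ := if 0 < Fm x y then 4 / Real.sqrt (Fm x y) else 0

/-- The kernel `K₂(x,y) = 2/√(F₊(x,y))`. -/
def K2 (x y : ℝ) : ℝ := 2 / Real.sqrt (Fp x y)

/-- `V(x) = ∫_I K₂(x,y) dy`. -/
def VV (x : ℝ) : ℝ := ∫ y in II, K2 x y

/-- `W(x) = sin²(x/2)·V(x)`. -/
def WW (x : ℝ) : ℝ := Real.sin (x / 2) ^ 2 * VV x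

/-- The `2π`-periodic extension of `W` to `ℝ`. -/
def Wper (x : ℝ) : ℝ := WW (mod2pi x)

/-- The constant `w₀ = 4 ∫₀^∞ (2s + s⁴)^{−1/2} ds`. -/
def w0 : ℝ := 4 * ∫ s in Set.Ioi (0 : ℝ), (2 * s + s ^ 4) ^ (-(1 : ℝ) / 2)

lemma mod2pi_eq_toIcoMod (x : ℝ) : mod2pi x = toIcoMod two_pi_pos 0 x := by
  rw [toIcoMod_eq_fract_mul, Int.fract, mod2pi]
  field_simp

lemma mod2pi_mem_Ico (x : ℝ) : mod2pi x ∈ Ico 0 (2 * π) := by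
  simpa [mod2pi_eq_toIcoMod] using toIcoMod_mem_Ico' two_pi_pos x

lemma mod2pi_of_mem_Ico {x : ℝ} (hx : x ∈ Ico 0 (2 * π)) : mod2pi x = x := by
  rw [mod2pi_eq_toIcoMod, toIcoMod_eq_self]
  simpa using hx

lemma sin_sq_half_mod2pi (x : ℝ) : sin (mod2pi x / 2) ^ 2 = sin (x / 2) ^ 2 := by
  rw [mod2pi, show (x - 2 * π * ⌊x / (2 * π)⌋) / 2 = x / 2 - ⌊x / (2 * π)⌋ * π by ring,
    sin_sub_int_mul_pi, ← sq_abs, abs_mul, abs_neg_one_zpow, one_mul, sq_abs]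

lemma sin_half_eq_zero_iff (x : ℝ) : sin (x / 2) = 0 ↔ mod2pi x = 0 := by
  obtain ⟨h0, h2π⟩ := mod2pi_mem_Ico x
  rw [← pow_eq_zero_iff two_ne_zero, ← sin_sq_half_mod2pi, pow_eq_zero_iff two_ne_zero,
    sin_eq_zero_iff_of_lt_of_lt (by linarith [pi_pos]) (by linarith)]
  constructor <;> intro h <;> linarith

lemma Wper_eq_sin_sq_mul (x : ℝ) : Wper x = sin (x / 2) ^ 2 * VV (mod2pi x) := by
  rw [Wper, WW, sin_sq_half_mod2pi]

lemma Wper_periodic : Function.Periodic Wper (2 * π) := fun x => by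
  rw [Wper, Wper, mod2pi_eq_toIcoMod, mod2pi_eq_toIcoMod, toIcoMod_add_right]

lemma Fp_two_pi_sub_two_pi_sub (x y : ℝ) : Fp (2 * π - x) (2 * π - y) = Fp x y := by
  simp only [Fp, show ∀ z, (2 * π - z) / 2 = π - z / 2 from fun z => by ring, cos_pi_sub,
    sin_pi_sub]
  ring

lemma VV_eq_intervalIntegral (x : ℝ) : VV x = ∫ y in 0..(2 * π), K2 x y := by
  rw [VV, II, intervalIntegral.integral_of_le two_pi_pos.le, integral_Ico_eq_integral_Ioo,
    integral_Ioc_eq_integral_Ioo]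

lemma VV_two_pi_sub (x : ℝ) : VV (2 * π - x) = VV x := by
  simp only [VV_eq_intervalIntegral, K2, ← Fp_two_pi_sub_two_pi_sub x]
  simpa using intervalIntegral.integral_comp_sub_left (fun y => 2 / √(Fp (2 * π - x) y)) (2 * π)
    (a := 0) (b := 2 * π) |>.symm

lemma WW_two_pi_sub (x : ℝ) : WW (2 * π - x) = WW x := by
  rw [WW, WW, VV_two_pi_sub, show (2 * π - x) / 2 = π - x / 2 by ring, sin_pi_sub]

lemma Wper_of_mem_Icc {x : ℝ} (hx : x ∈ Icc 0 (2 * π)) : Wper x = WW x := by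
  rcases hx.2.lt_or_eq with hlt | rfl
  · rw [Wper, mod2pi_of_mem_Ico ⟨hx.1, hlt⟩]
  · rw [show Wper (2 * π) = Wper 0 by simpa using Wper_periodic 0, Wper,
      mod2pi_of_mem_Ico ⟨le_rfl, two_pi_pos⟩, ← WW_two_pi_sub, sub_zero]

lemma Wper_neg (x : ℝ) : Wper (-x) = Wper x := by
  obtain ⟨h0, h2π⟩ := mod2pi_mem_Ico x
  have hshift : -x + ((⌊x / (2 * π)⌋ + 1 : ℤ) : ℝ) * (2 * π) = 2 * π - mod2pi x := by
    rw [mod2pi]; push_cast; ring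
  rw [← Wper_periodic.int_mul _ (-x), hshift, Wper_of_mem_Icc ⟨by linarith, by linarith⟩,
    WW_two_pi_sub, Wper]

lemma Wper_two_pi_sub (x : ℝ) : Wper (2 * π - x) = Wper x := by
  rw [sub_eq_neg_add, Wper_periodic, Wper_neg]

lemma sin_half_pos {x : ℝ} (hx0 : 0 < x) (hx : x < 2 * π) : 0 < sin (x / 2) :=
  sin_pos_of_pos_of_lt_pi (by linarith) (by linarith)

lemma Fp_pos {x y : ℝ} (hx : x ∈ Ioo 0 (2 * π)) (hy : y ∈ Icc 0 (2 * π)) : 0 < Fp x y := by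
  have hsx := sin_half_pos hx.1 hx.2
  have hsy : 0 ≤ sin (y / 2) :=
    sin_nonneg_of_nonneg_of_le_pi (by linarith [hy.1]) (by linarith [hy.2])
  rw [Fp]
  nlinarith [sin_sq_add_cos_sq (x / 2), sin_sq_add_cos_sq (y / 2), mul_pos hsx hsx,
    mul_nonneg hsx.le hsy, sq_nonneg (cos (x / 2) + cos (y / 2)),
    sq_nonneg (cos (x / 2) - cos (y / 2))]

lemma continuousOn_K2 :
    ContinuousOn (Function.uncurry K2) (Ioo 0 (2 * π) ×ˢ Icc 0 (2 * π)) := fun p hp => by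
  have hFp : Continuous fun q : ℝ × ℝ => Fp q.1 q.2 := by unfold Fp; fun_prop
  exact (continuousAt_const.div (continuous_sqrt.comp hFp).continuousAt
    (sqrt_pos.2 (Fp_pos hp.1 hp.2)).ne').continuousWithinAt

lemma continuousOn_VV : ContinuousOn VV (Ioo 0 (2 * π)) := by
  rw [continuousOn_iff_continuous_domRestrict]
  let clamp : ℝ → ℝ := fun y => projIcc 0 (2 * π) two_pi_pos.le y
  have hclamp : Continuous clamp := continuous_subtype_val.comp continuous_projIcc
  have hK : Continuous (Function.uncurry fun (x : Ioo 0 (2 * π)) y => K2 x (clamp y)) :=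
    continuousOn_K2.comp_continuous (f := fun p : Ioo 0 (2 * π) × ℝ => ((p.1 : ℝ), clamp p.2))
      (by fun_prop) fun p => ⟨p.1.2, (projIcc _ _ two_pi_pos.le p.2).2⟩
  have : LocallyCompactSpace (Ioo 0 (2 * π)) := isOpen_Ioo.locallyCompactSpace
  refine (continuous_parametric_integral_of_continuous (μ := volume) hK
    (isCompact_Icc (a := 0) (b := 2 * π))).congr fun x => ?_
  rw [domRestrict_apply, VV, II, ← integral_Icc_eq_integral_Ico]
  exact setIntegral_congr_fun measurableSet_Icc fun y hy => by simp [clamp, projIcc_of_mem _ hy]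

lemma VV_pos {x : ℝ} (hx : x ∈ Ioo 0 (2 * π)) : 0 < VV x := by
  have hK : ContinuousOn (K2 x) (Icc 0 (2 * π)) :=
    continuousOn_K2.comp (f := fun y => (x, y)) (by fun_prop) fun y hy => ⟨hx, hy⟩
  rw [VV_eq_intervalIntegral]
  refine intervalIntegral.intervalIntegral_pos_of_pos_on
    (hK.intervalIntegrable_of_Icc two_pi_pos.le) (fun y hy => ?_) two_pi_pos
  exact div_pos two_pos (sqrt_pos.2 (Fp_pos hx (Ioo_subset_Icc_self hy)))

lemma Fp_two_pi_sub (x u : ℝ) :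
    Fp x (2 * π - u) = (cos (x / 2) - cos (u / 2)) ^ 2 + 4 * sin (x / 2) * sin (u / 2) := by
  rw [Fp, show (2 * π - u) / 2 = π - u / 2 by ring, cos_pi_sub, sin_pi_sub]
  ring

/-- The `sin`-term of `F₊` gives the bound for `s ≤ 1`, the `cos`-term for `s ≥ 1`. -/
lemma Fp_two_pi_sub_ge {x m s : ℝ} (hx : 0 ≤ x) (hxm : x ≤ 2 * m) (hm : 4 * m ≤ π)
    (hsin : sin (x / 2) = m ^ 3) (hs : 0 ≤ s) (hms : 2 * m * s ≤ π) :
    m ^ 4 * (2 * s + s ^ 4) / 64 ≤ Fp x (2 * π - 4 * m * s) := by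
  have hm0 : 0 ≤ m := by linarith
  rw [Fp_two_pi_sub, show 4 * m * s / 2 = 2 * m * s by ring, hsin]
  have hsinb : 0 ≤ sin (2 * m * s) := sin_nonneg_of_nonneg_of_le_pi (by positivity) hms
  have hpi := pi_gt_three
  have hpi4 := pi_le_four
  rcases le_total s 1 with hs1 | hs1
  · have hJordan := mul_le_sin (x := 2 * m * s) (by positivity) (by nlinarith)
    have hsinb' : m * s ≤ sin (2 * m * s) := by
      refine le_trans ?_ hJordan
      rw [div_mul_eq_mul_div, le_div_iff₀ pi_pos]
      nlinarith [mul_nonneg (mul_nonneg hm0 hs) (sub_nonneg.2 hpi4)]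
    have hs4 : s ^ 4 ≤ s := by
      nlinarith [pow_le_one₀ hs hs1 (n := 3), pow_succ s 3]
    nlinarith [sq_nonneg (cos (x / 2) - cos (2 * m * s)), pow_succ m 3,
      mul_nonneg (pow_nonneg hm0 4) hs, mul_le_mul_of_nonneg_left hsinb' (pow_nonneg hm0 3),
      mul_le_mul_of_nonneg_left hs4 (pow_nonneg hm0 4)]
  · set b := 2 * m * s with hb_def
    have hb0 : 0 ≤ b := by positivity
    have hxb : x ≤ b := by nlinarith
    have hcosx : 1 - b ^ 2 / 8 ≤ cos (x / 2) := by
      nlinarith [one_sub_sq_div_two_le_cos (x := x / 2)]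
    have hJordan := mul_le_sin (x := b / 2) (by positivity) (by linarith)
    have hsin_half : b / π ≤ sin (b / 2) := le_trans (le_of_eq (by field_simp)) hJordan
    have hcosb : cos b = 1 - 2 * sin (b / 2) ^ 2 := by
      have := cos_two_mul' (b / 2)
      rw [show 2 * (b / 2) = b by ring] at this
      nlinarith [sin_sq_add_cos_sq (b / 2)]
    have hpi2 : π ^ 2 ≤ 10 := by nlinarith [pi_lt_d2]
    have hsq : b ^ 2 / 10 ≤ sin (b / 2) ^ 2 := by
      calc b ^ 2 / 10 ≤ b ^ 2 / π ^ 2 :=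
            div_le_div_of_nonneg_left (sq_nonneg b) (by positivity) hpi2
        _ = (b / π) ^ 2 := by ring
        _ ≤ sin (b / 2) ^ 2 := pow_le_pow_left₀ (by positivity) hsin_half 2
    have hD : 3 * b ^ 2 / 40 ≤ cos (x / 2) - cos b := by linarith
    have hD2 : (3 * b ^ 2 / 40) ^ 2 ≤ (cos (x / 2) - cos b) ^ 2 :=
      pow_le_pow_left₀ (by positivity) hD 2
    have hs4 : 2 * s + s ^ 4 ≤ 3 * s ^ 4 := by nlinarith [one_le_pow₀ hs1 (n := 3), pow_succ s 3]
    have hsin_term : 0 ≤ 4 * m ^ 3 * sin b := by positivity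
    rw [hb_def] at hD2 ⊢
    nlinarith [pow_nonneg hm0 4, pow_nonneg hs 4, mul_le_mul_of_nonneg_left hs4 (pow_nonneg hm0 4)]

/-- The scale `μ(x) = sin(x/2)^{1/3}` at which the kernel concentrates near `y = 2π` as
`x → 0⁺`. -/
def cbrtSinHalf (x : ℝ) : ℝ := sin (x / 2) ^ ((1 : ℝ) / 3)

lemma cbrtSinHalf_pow_three {x : ℝ} (h : 0 ≤ sin (x / 2)) : cbrtSinHalf x ^ 3 = sin (x / 2) := by
  rw [cbrtSinHalf, ← rpow_natCast, ← rpow_mul h]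
  norm_num

lemma cbrtSinHalf_pos {x : ℝ} (h : 0 < sin (x / 2)) : 0 < cbrtSinHalf x := rpow_pos_of_pos h _

lemma le_two_mul_cbrtSinHalf {x : ℝ} (hx0 : 0 < x) (hx : x ≤ 1 / 2) : x ≤ 2 * cbrtSinHalf x := by
  have hs := sin_half_pos hx0 (by linarith [pi_gt_three])
  refine le_of_pow_le_pow_left₀ three_ne_zero (by positivity [cbrtSinHalf_pos hs]) ?_
  have hJordan := mul_le_sin (x := x / 2) (by linarith) (by linarith [pi_gt_three])
  rw [mul_pow, cbrtSinHalf_pow_three hs.le]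
  have hx4 : x / 4 ≤ 2 / π * (x / 2) := by
    rw [show 2 / π * (x / 2) = x / π by ring]
    exact div_le_div_of_nonneg_left hx0.le pi_pos pi_le_four
  nlinarith [mul_pos hx0 hx0]

lemma four_mul_cbrtSinHalf_le_pi {x : ℝ} (hx0 : 0 < x) (hx : x ≤ 1 / 2) :
    4 * cbrtSinHalf x ≤ π := by
  have hs := sin_half_pos hx0 (by linarith [pi_gt_three])
  refine le_of_pow_le_pow_left₀ three_ne_zero pi_pos.le ?_
  rw [mul_pow, cbrtSinHalf_pow_three hs.le]
  nlinarith [sin_le (x := x / 2) (by linarith), pi_gt_three, sq_nonneg π]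

def w0Integrand (s : ℝ) : ℝ := (2 * s + s ^ 4) ^ (-(1 : ℝ) / 2)

lemma w0Integrand_eq {s : ℝ} (hs : 0 ≤ s) : w0Integrand s = (√(2 * s + s ^ 4))⁻¹ := by
  rw [w0Integrand, neg_div, rpow_neg (by positivity), sqrt_eq_rpow]

/-- The substitution `y = 2π − 4μ(x) s` in `V(x)`, with the factor `4μ(x)²` that makes
`|sin(x/2)|^{-5/3} W(x)` its integral. -/
def rescaledK2 (x s : ℝ) : ℝ :=
  (Ioc 0 (π / (2 * cbrtSinHalf x))).indicator
    (fun s => 4 * cbrtSinHalf x ^ 2 * K2 x (2 * π - 4 * cbrtSinHalf x * s)) s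

lemma rescaledK2_nonneg (x s : ℝ) : 0 ≤ rescaledK2 x s :=
  indicator_nonneg (fun _ _ => by unfold K2; positivity) s

lemma rescaledK2_le {x s : ℝ} (hx0 : 0 < x) (hx : x ≤ 1 / 2) (hs : 0 < s) :
    rescaledK2 x s ≤ 64 * w0Integrand s := by
  set m := cbrtSinHalf x
  have hsin := sin_half_pos hx0 (by linarith [pi_gt_three])
  have hm : 0 < m := cbrtSinHalf_pos hsin
  have hP : 0 < 2 * s + s ^ 4 := by positivity
  rw [rescaledK2]
  by_cases hmem : s ∈ Ioc 0 (π / (2 * m))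
  · rw [indicator_of_mem hmem, w0Integrand_eq hs.le]
    have hms : 2 * m * s ≤ π := by
      have := hmem.2; rwa [le_div_iff₀ (by positivity), mul_comm] at this
    have hF := Fp_two_pi_sub_ge hx0.le (le_two_mul_cbrtSinHalf hx0 hx)
      (four_mul_cbrtSinHalf_le_pi hx0 hx) (cbrtSinHalf_pow_three hsin.le).symm
      hs.le hms
    have hsqrt : m ^ 2 * √(2 * s + s ^ 4) / 8 ≤ √(Fp x (2 * π - 4 * m * s)) := by
      rw [le_sqrt' (by positivity)]
      calc _ = m ^ 4 * (2 * s + s ^ 4) / 64 := by rw [div_pow, mul_pow, sq_sqrt hP.le]; ring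
        _ ≤ _ := hF
    calc 4 * m ^ 2 * K2 x (2 * π - 4 * m * s)
        ≤ 4 * m ^ 2 * (2 / (m ^ 2 * √(2 * s + s ^ 4) / 8)) := by
          unfold K2; gcongr
        _ = 64 * (√(2 * s + s ^ 4))⁻¹ := by field_simp; ring
  · rw [indicator_of_notMem hmem]
    exact mul_nonneg (by norm_num) (rpow_nonneg hP.le _)

lemma integral_rescaledK2 {x : ℝ} (hx : 0 < sin (x / 2)) :
    ∫ s in Ioi 0, rescaledK2 x s = cbrtSinHalf x * VV x := by
  set m := cbrtSinHalf x
  have hm : 0 < m := cbrtSinHalf_pos hx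
  have hT : 0 ≤ π / (2 * m) := by positivity
  simp only [rescaledK2]
  rw [integral_indicator measurableSet_Ioc, Measure.restrict_restrict measurableSet_Ioc,
    inter_eq_self_of_subset_left Ioc_subset_Ioi_self, ← intervalIntegral.integral_of_le hT,
    intervalIntegral.integral_const_mul, intervalIntegral.integral_comp_sub_mul _ (by positivity),
    show 2 * π - 4 * m * (π / (2 * m)) = 0 by field_simp; ring, mul_zero, sub_zero,
    VV_eq_intervalIntegral, smul_eq_mul]
  field_simp
  ring

lemma tendsto_cbrtSinHalf : Tendsto cbrtSinHalf (𝓝 0) (𝓝 0) := by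
  have h : ContinuousAt cbrtSinHalf 0 :=
    (continuousAt_rpow_const _ _ (Or.inr (by norm_num))).comp (by fun_prop)
  simpa [cbrtSinHalf, ContinuousAt] using h

lemma eventually_mem_Ioc_half : ∀ᶠ x in 𝓝[>] (0 : ℝ), x ∈ Ioc 0 (1 / 2) :=
  Ioc_mem_nhdsGT (by norm_num)

lemma Fp_two_pi_sub_eq_sinc {x m s : ℝ} (hm : m ≠ 0) (hs : s ≠ 0) (hsin : sin (x / 2) = m ^ 3) :
    Fp x (2 * π - 4 * m * s) =
      m ^ 4 * ((2 * s ^ 2 * sinc (m * s) ^ 2 - (1 - cos (x / 2)) / m ^ 2) ^ 2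
        + 8 * s * sinc (2 * m * s)) := by
  have hcos : cos (2 * m * s) = 1 - 2 * sin (m * s) ^ 2 := by
    rw [show 2 * m * s = 2 * (m * s) by ring, cos_two_mul', cos_sq']
    ring
  rw [Fp_two_pi_sub, show 4 * m * s / 2 = 2 * m * s by ring, hsin, hcos,
    sinc_of_ne_zero (mul_ne_zero hm hs), sinc_of_ne_zero (by positivity)]
  field_simp
  ring

lemma tendsto_rescaledK2 {s : ℝ} (hs : 0 < s) :
    Tendsto (fun x => rescaledK2 x s) (𝓝[>] 0) (𝓝 (4 * w0Integrand s)) := by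
  let δ : ℝ → ℝ := fun x => (1 - cos (x / 2)) / cbrtSinHalf x ^ 2
  let Φ : ℝ × ℝ → ℝ := fun p =>
    8 / √((2 * s ^ 2 * sinc (p.1 * s) ^ 2 - p.2) ^ 2 + 8 * s * sinc (2 * p.1 * s))
  have hΦ0 : Φ (0, 0) = 4 * w0Integrand s := by
    simp only [Φ, zero_mul, mul_zero, sinc_zero, w0Integrand_eq hs.le]
    rw [show (2 * s ^ 2 * 1 ^ 2 - 0) ^ 2 + 8 * s * 1 = 2 ^ 2 * (2 * s + s ^ 4) by ring,
      sqrt_mul (by norm_num), sqrt_sq (by norm_num)]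
    field_simp
    norm_num
  have hΦ : ContinuousAt Φ (0, 0) := by
    refine continuousAt_const.div (continuous_sqrt.continuousAt.comp (by fun_prop)) ?_
    simp only [zero_mul, mul_zero, sinc_zero]
    positivity
  have hm : Tendsto cbrtSinHalf (𝓝[>] 0) (𝓝 0) := tendsto_cbrtSinHalf.mono_left nhdsWithin_le_nhds
  have hδ : Tendsto δ (𝓝[>] 0) (𝓝 0) := by
    refine squeeze_zero' ?_ ?_ (by simpa using hm.pow 4)
    · filter_upwards with x using div_nonneg (by linarith [cos_le_one (x / 2)]) (sq_nonneg _)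
    · filter_upwards [eventually_mem_Ioc_half] with x hx
      have hsin := sin_half_pos hx.1 (by linarith [hx.2, pi_gt_three])
      have hcos : 0 ≤ cos (x / 2) :=
        cos_nonneg_of_mem_Icc ⟨by linarith [pi_pos, hx.1], by linarith [pi_gt_three, hx.2]⟩
      have hm0 := cbrtSinHalf_pos hsin
      rw [div_le_iff₀ (by positivity)]
      nlinarith [sin_sq_add_cos_sq (x / 2), cos_le_one (x / 2), cbrtSinHalf_pow_three hsin.le]
  have hmem : ∀ᶠ x in 𝓝[>] (0 : ℝ), 2 * cbrtSinHalf x * s < π := by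
    have := (hm.const_mul (2 * s)).eventually (gt_mem_nhds (a := π) (by simpa using pi_pos))
    filter_upwards [this] with x hx
    linarith
  refine hΦ0 ▸ (hΦ.tendsto.comp (hm.prodMk_nhds hδ)).congr' ?_
  filter_upwards [eventually_mem_Ioc_half, hmem] with x hx hmx
  have hsin := sin_half_pos hx.1 (by linarith [hx.2, pi_gt_three])
  have hm0 := cbrtSinHalf_pos hsin
  have hsm : s ∈ Ioc 0 (π / (2 * cbrtSinHalf x)) :=
    ⟨hs, by rw [le_div_iff₀ (by positivity)]; linarith⟩
  rw [Function.comp_apply, rescaledK2, indicator_of_mem hsm, K2,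
    Fp_two_pi_sub_eq_sinc hm0.ne' hs.ne' (cbrtSinHalf_pow_three hsin.le).symm,
    sqrt_mul (by positivity), show cbrtSinHalf x ^ 4 = (cbrtSinHalf x ^ 2) ^ 2 by ring,
    sqrt_sq (by positivity)]
  simp only [Φ, δ]
  field_simp
  norm_num

lemma integrableOn_w0Integrand : IntegrableOn w0Integrand (Ioi 0) := by
  have hmeas : Measurable w0Integrand := by unfold w0Integrand; fun_prop
  rw [← Ioc_union_Ioi_eq_Ioi zero_le_one]
  refine IntegrableOn.union ?_ ?_
  · have hdom : IntegrableOn (fun s : ℝ => s ^ (-(1 : ℝ) / 2)) (Ioc 0 1) :=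
      (integrableOn_Ioc_iff_integrableOn_Ioo (by simp)).2
        ((intervalIntegral.integrableOn_Ioo_rpow_iff one_pos).2 (by norm_num))
    refine hdom.mono' hmeas.aestronglyMeasurable ?_
    filter_upwards [ae_restrict_mem measurableSet_Ioc] with s hs
    have hs0 := hs.1
    rw [w0Integrand, norm_of_nonneg (rpow_nonneg (by positivity) _)]
    exact rpow_le_rpow_of_nonpos hs.1 (by nlinarith [pow_pos hs.1 4, hs.1]) (by norm_num)
  · refine (integrableOn_Ioi_rpow_of_lt (by norm_num : (-2 : ℝ) < -1) one_pos).mono'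
      hmeas.aestronglyMeasurable ?_
    filter_upwards [ae_restrict_mem measurableSet_Ioi] with s (hs : 1 < s)
    have hs0 : 0 < s := one_pos.trans hs
    rw [w0Integrand, norm_of_nonneg (rpow_nonneg (by positivity) _),
      show s ^ (-2 : ℝ) = (s ^ 4) ^ (-(1 : ℝ) / 2) by
        rw [← rpow_natCast, ← rpow_mul hs0.le]; norm_num]
    exact rpow_le_rpow_of_nonpos (by positivity) (by linarith) (by norm_num)

lemma w0_eq : w0 = 4 * ∫ s in Ioi 0, w0Integrand s := rfl

lemma w0_pos : 0 < w0 := by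
  have hpos : ∀ s ∈ Ioi (0 : ℝ), 0 < w0Integrand s := fun s (hs : 0 < s) =>
    rpow_pos_of_pos (by positivity) _
  have hint : 0 < ∫ s in Ioi 0, w0Integrand s := by
    refine (setIntegral_pos_iff_support_of_nonneg_ae ?_ integrableOn_w0Integrand).2 ?_
    · filter_upwards [ae_restrict_mem measurableSet_Ioi] with s hs using (hpos s hs).le
    · rw [inter_eq_right.2 fun s hs => Function.mem_support.2 (hpos s hs).ne', volume_Ioi]
      exact ENNReal.zero_lt_top
  rw [w0_eq]
  positivity

lemma measurable_rescaledK2 (x : ℝ) : Measurable (rescaledK2 x) :=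
  (by unfold K2 Fp; fun_prop : Measurable fun s => 4 * cbrtSinHalf x ^ 2 *
    K2 x (2 * π - 4 * cbrtSinHalf x * s)).indicator measurableSet_Ioc

lemma tendsto_normalized_Wper_nhdsGT :
    Tendsto (fun x => |sin (x / 2)| ^ (-(5 : ℝ) / 3) * Wper x) (𝓝[>] 0) (𝓝 w0) := by
  have hlim : Tendsto (fun x => ∫ s in Ioi 0, rescaledK2 x s) (𝓝[>] 0)
      (𝓝 (∫ s in Ioi 0, 4 * w0Integrand s)) := by
    refine tendsto_integral_filter_of_dominated_convergence (fun s => 64 * w0Integrand s)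
      (.of_forall fun x => (measurable_rescaledK2 x).aestronglyMeasurable) ?_
      (integrableOn_w0Integrand.const_mul 64) ?_
    · filter_upwards [eventually_mem_Ioc_half] with x hx
      filter_upwards [ae_restrict_mem measurableSet_Ioi] with s hs
      rw [norm_of_nonneg (rescaledK2_nonneg x s)]
      exact rescaledK2_le hx.1 hx.2 hs
    · filter_upwards [ae_restrict_mem measurableSet_Ioi] with s hs using tendsto_rescaledK2 hs
  rw [integral_const_mul, ← w0_eq] at hlim
  refine hlim.congr' ?_
  filter_upwards [eventually_mem_Ioc_half] with x hx
  have hsin := sin_half_pos hx.1 (by linarith [hx.2, pi_gt_three])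
  rw [integral_rescaledK2 hsin, Wper_of_mem_Icc ⟨hx.1.le, by linarith [hx.2, pi_gt_three]⟩, WW,
    abs_of_pos hsin, ← mul_assoc, ← rpow_natCast, ← rpow_add hsin, cbrtSinHalf]
  norm_num

lemma tendsto_normalized_Wper :
    Tendsto (fun x => |sin (x / 2)| ^ (-(5 : ℝ) / 3) * Wper x) (𝓝[≠] 0) (𝓝 w0) := by
  have hneg : Tendsto Neg.neg (𝓝[<] (0 : ℝ)) (𝓝[>] 0) :=
    tendsto_nhdsWithin_iff.2 ⟨(continuous_neg.tendsto' 0 0 neg_zero).mono_left nhdsWithin_le_nhds,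
      eventually_nhdsWithin_of_forall fun x (hx : x < 0) => neg_pos.2 hx⟩
  rw [← nhdsLT_sup_nhdsGT, tendsto_sup]
  refine ⟨(tendsto_normalized_Wper_nhdsGT.comp hneg).congr fun x => ?_,
    tendsto_normalized_Wper_nhdsGT⟩
  rw [Function.comp_apply, Wper_neg, neg_div, sin_neg, abs_neg]

lemma mod2pi_mem_Ioo {x : ℝ} (h : sin (x / 2) ≠ 0) : mod2pi x ∈ Ioo 0 (2 * π) :=
  ⟨(mod2pi_mem_Ico x).1.lt_of_ne fun h0 => h ((sin_half_eq_zero_iff x).2 h0.symm),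
    (mod2pi_mem_Ico x).2⟩

lemma continuousAt_Wper {x : ℝ} (h : sin (x / 2) ≠ 0) : ContinuousAt Wper x := by
  have hmod : ContinuousAt mod2pi x := by
    rw [show mod2pi = toIcoMod two_pi_pos 0 from funext mod2pi_eq_toIcoMod]
    refine continuousAt_toIcoMod two_pi_pos 0 ?_
    rwa [AddCommGroup.modEq_comm, AddCommGroup.modEq_iff_toIcoMod_eq_left two_pi_pos,
      ← mod2pi_eq_toIcoMod, ← sin_half_eq_zero_iff]
  rw [show Wper = fun y => sin (y / 2) ^ 2 * VV (mod2pi y) from funext Wper_eq_sin_sq_mul]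
  exact (by fun_prop : Continuous fun y => sin (y / 2) ^ 2).continuousAt.mul
    ((continuousOn_VV.continuousAt (isOpen_Ioo.mem_nhds (mod2pi_mem_Ioo h))).comp hmod)

def normalizedWper (x : ℝ) : ℝ :=
  if sin (x / 2) = 0 then w0 else |sin (x / 2)| ^ (-(5 : ℝ) / 3) * Wper x

lemma Wper_eq_normalizedWper_mul (x : ℝ) :
    Wper x = normalizedWper x * |sin (x / 2)| ^ ((5 : ℝ) / 3) := by
  rw [normalizedWper]
  split_ifs with h
  · rw [Wper_eq_sin_sq_mul, h, abs_zero, zero_rpow (by norm_num)]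
    ring
  · rw [mul_comm, ← mul_assoc, ← rpow_add (abs_pos.2 h)]
    norm_num

lemma normalizedWper_pos (x : ℝ) : 0 < normalizedWper x := by
  rw [normalizedWper]
  split_ifs with h
  · exact w0_pos
  · rw [Wper_eq_sin_sq_mul]
    have := VV_pos (mod2pi_mem_Ioo h)
    positivity

lemma normalizedWper_periodic : Function.Periodic normalizedWper (2 * π) := fun x => by
  simp only [normalizedWper, show (x + 2 * π) / 2 = x / 2 + π by ring, sin_add_pi, neg_eq_zero,
    abs_neg, Wper_periodic x]

lemma continuousAt_normalizedWper_zero : ContinuousAt normalizedWper 0 := by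
  rw [← continuousWithinAt_compl_self, ContinuousWithinAt, normalizedWper, if_pos (by simp)]
  refine tendsto_normalized_Wper.congr' ?_
  filter_upwards [nhdsWithin_le_nhds (Ioo_mem_nhds (neg_neg_iff_pos.2 two_pi_pos) two_pi_pos),
    self_mem_nhdsWithin] with y hy (hy0 : y ≠ 0)
  have hsin : sin (y / 2) ≠ 0 := by
    rw [Ne, sin_eq_zero_iff_of_lt_of_lt (by linarith [hy.1]) (by linarith [hy.2])]
    exact div_ne_zero hy0 two_ne_zero
  rw [normalizedWper, if_neg hsin]

lemma continuous_normalizedWper : Continuous normalizedWper := by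
  refine continuous_iff_continuousAt.2 fun x => ?_
  by_cases hx : sin (x / 2) = 0
  · obtain ⟨k, hk⟩ := sin_eq_zero_iff.1 hx
    have hshift : normalizedWper = fun y => normalizedWper (y - x) := by
      funext y
      rw [show y - x = y - k * (2 * π) by linarith, normalizedWper_periodic.sub_int_mul_eq]
    have h0 : ContinuousAt normalizedWper (x - x) := by
      rw [sub_self]; exact continuousAt_normalizedWper_zero
    rw [hshift]
    exact h0.comp (f := fun y => y - x) (by fun_prop)
  · have hne : ∀ᶠ y in 𝓝 x, sin (y / 2) ≠ 0 :=
      (by fun_prop : Continuous fun y => sin (y / 2)).continuousAt.eventually_ne hx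
    have hf : ContinuousAt (fun y => |sin (y / 2)| ^ (-(5 : ℝ) / 3) * Wper y) x :=
      ((by fun_prop : Continuous fun y => |sin (y / 2)|).continuousAt.rpow_const
        (Or.inl (abs_ne_zero.2 hx))).mul (continuousAt_Wper hx)
    refine hf.congr ?_
    filter_upwards [hne] with y hy
    rw [normalizedWper, if_neg hy]

lemma continuous_Wper : Continuous Wper := by
  rw [show Wper = fun x => normalizedWper x * |sin (x / 2)| ^ ((5 : ℝ) / 3) from
    funext Wper_eq_normalizedWper_mul]
  exact continuous_normalizedWper.mul ((by fun_prop : Continuous fun x => |sin (x / 2)|).rpow_const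
    fun _ => Or.inr (by norm_num))

lemma exists_Wper_bounds : ∃ c₁ > (0 : ℝ), ∃ c₂ > (0 : ℝ), ∀ x : ℝ,
    c₁ * |sin (x / 2)| ^ ((5 : ℝ) / 3) ≤ Wper x ∧ Wper x ≤ c₂ * |sin (x / 2)| ^ ((5 : ℝ) / 3) := by
  have hcpt := normalizedWper_periodic.compact_of_continuous two_pi_pos.ne'
    continuous_normalizedWper
  obtain ⟨_, ⟨x₀, rfl⟩, hmin⟩ := hcpt.exists_isLeast (range_nonempty _)
  obtain ⟨c₂, hc₂⟩ := hcpt.bddAbove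
  refine ⟨normalizedWper x₀, normalizedWper_pos x₀, c₂,
    (normalizedWper_pos 0).trans_le (hc₂ ⟨0, rfl⟩), fun x => ?_⟩
  rw [Wper_eq_normalizedWper_mul]
  have := rpow_nonneg (abs_nonneg (sin (x / 2))) ((5 : ℝ) / 3)
  exact ⟨by gcongr; exact hmin ⟨x, rfl⟩, by gcongr; exact hc₂ ⟨x, rfl⟩⟩

/-- **Lemma 4.1.**  `W` is continuous, symmetric under `x ↦ 2π − x`, comparable to
`|sin(x/2)|^{5/3}` from above and below, and `|sin(x/2)|^{−5/3} W(x) → w₀ ∈ (0,∞)` as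
`x → 0`. -/
theorem W_asymptotics :
    Continuous Wper ∧
    (∀ x : ℝ, Wper (2 * π - x) = Wper x) ∧
    (∃ c₁ > (0 : ℝ), ∃ c₂ > (0 : ℝ), ∀ x : ℝ,
      c₁ * |Real.sin (x / 2)| ^ ((5 : ℝ) / 3) ≤ Wper x ∧
        Wper x ≤ c₂ * |Real.sin (x / 2)| ^ ((5 : ℝ) / 3)) ∧
    IntegrableOn (fun s : ℝ => (2 * s + s ^ 4) ^ (-(1 : ℝ) / 2)) (Set.Ioi 0) ∧
    0 < w0 ∧
    Tendsto (fun x : ℝ => |Real.sin (x / 2)| ^ (-(5 : ℝ) / 3) * Wper x)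
      (𝓝[≠] (0 : ℝ)) (𝓝 w0) :=
  ⟨continuous_Wper, Wper_two_pi_sub, exists_Wper_bounds, integrableOn_w0Integrand, w0_pos,
    tendsto_normalized_Wper⟩
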